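/- arXiv:math/0603500 — 2 statements merged into one kernel-verified Lean document; each statement's English description precedes it below -/
import Mathlib

section
/- Let A be a unital Banach algebra and J ⊆ A a closed two-sided ideal. Suppose S ∈ M_N(J) is such that I + S is invertible in M_N(A), and suppose the path s ↦ I + sS (s ∈ [0,1]) is null-homotopic in the space of elliptic elements Ell_N(A) = {a ∈ M_N(A) : a + M_N(J) invertible in M_N(A)/M_N(J)} relative to GL_N(A), via a homotopy h with h(s,0) = I + sS, h(s,1) = I, h(0,t) = I, and h(s,t) elliptic for all s,t, h(0,·), h(1,·), h(·,1) ∈ GL_N(A). If every path of invertibles in M_N(A/J) starting at I lifts to a path of invertibles in M_N(A) starting at I, then I + S is connected to I within {I + T : T ∈ M_N(J), I + T invertible}. -/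
/-!
Let `G = GL_N(A) ∩ (1 + M_N(J))`. Running along the bottom of the homotopy to `h s 0` and then
up to `h s 1 = 1` gives a family of loops of elliptic elements at `1`; lift each to a path `v` of
invertibles starting at `1`. Two lifts of the same loop differ by a path in `G`, and a lift of one
loop, perturbed by the difference of two nearby loops, stays invertible and lifts the other loop,
so the path component of `v 1` in `G` does not depend on `s`. For `s = 0` the loop is constant
and `v 1` is joined to `1`; for `s = 1` the loop runs through `1 + M_N(J)` to `1 + S` and back
through invertibles, and splitting `v` at that corner joins `1 + S` to `v 1⁻¹`, hence to `1`.
-/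

/-- An `N×N` matrix over `A` is elliptic relative to the ideal `J` if it is
invertible modulo matrices with entries in `J`. -/
def IsElliptic {A : Type*} [Ring A] (J : Set A) {N : ℕ}
    (a : Matrix (Fin N) (Fin N) A) : Prop :=
  ∃ q : Matrix (Fin N) (Fin N) A,
    (∀ i j, (a * q - 1) i j ∈ J) ∧ (∀ i j, (q * a - 1) i j ∈ J)

open Set Topology Function

namespace Ideal

variable {R : Type*} [Ring R]

def unitsCongrOne (I : Ideal R) : Submonoid R where
  carrier := {x | IsUnit x ∧ x - 1 ∈ I}
  one_mem' := ⟨isUnit_one, by simp⟩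
  mul_mem' {x y} hx hy := by
    refine ⟨hx.1.mul hy.1, ?_⟩
    rw [show x * y - 1 = x * (y - 1) + (x - 1) by noncomm_ring]
    exact I.add_mem (I.mul_mem_left x hy.2) hx.2

variable {I : Ideal R} {x y : R}

theorem mem_unitsCongrOne_of_sub_mem (hy : IsUnit y) (hx : x - 1 ∈ I) (hxy : x - y ∈ I) :
    y ∈ I.unitsCongrOne :=
  ⟨hy, by simpa using I.sub_mem hx hxy⟩

theorem inverse_mul_mem_unitsCongrOne (hx : IsUnit x) (hy : IsUnit y) (hxy : y - x ∈ I) :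
    Ring.inverse x * y ∈ I.unitsCongrOne := by
  refine ⟨hx.ringInverse.mul hy, ?_⟩
  rw [show Ring.inverse x * y - 1 = Ring.inverse x * (y - x) by
    rw [mul_sub, Ring.inverse_mul_cancel x hx]]
  exact I.mul_mem_left _ hxy

theorem inverse_mem_unitsCongrOne (hx : x ∈ I.unitsCongrOne) :
    Ring.inverse x ∈ I.unitsCongrOne := by
  simpa using inverse_mul_mem_unitsCongrOne hx.1 isUnit_one (by simpa using I.neg_mem hx.2)

end Ideal

theorem joinedIn_of_continuousOn_Icc {X : Type*} [TopologicalSpace X] {F : Set X}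
    {f : ℝ → X} {a b : ℝ} (hab : a ≤ b) (hf : ContinuousOn f (Icc a b))
    (hfF : MapsTo f (Icc a b) F) : JoinedIn F (f a) (f b) :=
  ((((convex_Icc a b).isPathConnected (nonempty_Icc.2 hab)).joinedIn a (left_mem_Icc.2 hab) b
    (right_mem_Icc.2 hab)).map_continuousOn hf).mono hfF.image_subset

theorem JoinedIn.exists_continuousOn_Icc {X : Type*} [TopologicalSpace X] {F : Set X} {x y : X}
    (h : JoinedIn F x y) :
    ∃ γ : ℝ → X, ContinuousOn γ (Icc 0 1) ∧ γ 0 = x ∧ γ 1 = y ∧ MapsTo γ (Icc 0 1) F :=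
  ⟨h.somePath.extend, h.somePath.continuous_extend.continuousOn, h.somePath.extend_zero,
    h.somePath.extend_one, fun t ht => by
      rw [Path.extend_apply _ ht]
      exact h.somePath_mem _⟩

theorem JoinedIn.mul_of_submonoid {M : Type*} [Monoid M] [TopologicalSpace M] [ContinuousMul M]
    {S : Submonoid M} {a b c d : M} (h : JoinedIn S a b) (h' : JoinedIn S c d) :
    JoinedIn S (a * c) (b * d) :=
  (h.mul h').mono S.coe_mul_self_eq.subset

section Lift

variable {R : Type*} [Ring R] [TopologicalSpace R]

structure IsUnitLift (I : Ideal R) (u v : ℝ → R) : Prop where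
  continuousOn : ContinuousOn v (Icc 0 1)
  map_zero : v 0 = 1
  isUnit : ∀ t ∈ Icc (0 : ℝ) 1, IsUnit (v t)
  sub_mem : ∀ t ∈ Icc (0 : ℝ) 1, u t - v t ∈ I

variable {I : Ideal R} {u v : ℝ → R}

theorem isUnitLift_one (hu : ∀ t ∈ Icc (0 : ℝ) 1, u t - 1 ∈ I) : IsUnitLift I u 1 :=
  ⟨continuousOn_const, rfl, fun _ _ => isUnit_one, hu⟩

theorem IsUnitLift.mem_unitsCongrOne (hv : IsUnitLift I u v) {t : ℝ} (ht : t ∈ Icc (0 : ℝ) 1)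
    (hu : u t - 1 ∈ I) : v t ∈ I.unitsCongrOne :=
  Ideal.mem_unitsCongrOne_of_sub_mem (hv.isUnit t ht) hu (hv.sub_mem t ht)

end Lift

section Banach

variable {R : Type*} [NormedRing R] [CompleteSpace R] {I : Ideal R} {u v w : ℝ → R}

theorem continuousOn_ringInverse : ContinuousOn (Ring.inverse : R → R) {x | IsUnit x} :=
  fun _ ⟨u, hu⟩ ↦ hu ▸ (NormedRing.inverse_continuousAt u).continuousWithinAt

theorem JoinedIn.ringInverse_unitsCongrOne {x y : R} (h : JoinedIn I.unitsCongrOne x y) :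
    JoinedIn I.unitsCongrOne (Ring.inverse x) (Ring.inverse y) :=
  (h.map_continuousOn (continuousOn_ringInverse.mono fun _ hz => hz.1)).mono
    (image_subset_iff.2 fun _ hz => Ideal.inverse_mem_unitsCongrOne hz)

theorem IsUnitLift.continuousOn_inverse (hv : IsUnitLift I u v) :
    ContinuousOn (fun t => Ring.inverse (v t)) (Icc 0 1) :=
  continuousOn_ringInverse.comp hv.continuousOn hv.isUnit

theorem IsUnitLift.joinedIn_one_inverse_mul (hv : IsUnitLift I u v) (hw : IsUnitLift I u w) :
    JoinedIn I.unitsCongrOne 1 (Ring.inverse (v 1) * w 1) := by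
  have h := joinedIn_of_continuousOn_Icc zero_le_one
    (hv.continuousOn_inverse.mul hw.continuousOn) fun t ht =>
      Ideal.inverse_mul_mem_unitsCongrOne (hv.isUnit t ht) (hw.isUnit t ht)
        (by simpa using I.sub_mem (hv.sub_mem t ht) (hw.sub_mem t ht))
  simpa [hv.map_zero, hw.map_zero] using h

theorem IsUnitLift.joinedIn_of_map_one (hv : IsUnitLift I u v) (hw : IsUnitLift I u w)
    (hu : u 1 = 1) : JoinedIn I.unitsCongrOne (v 1) (w 1) := by
  have hv1 := hv.mem_unitsCongrOne (right_mem_Icc.2 zero_le_one) (by simp [hu])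
  have h := (JoinedIn.refl hv1).mul_of_submonoid (hv.joinedIn_one_inverse_mul hw)
  rwa [mul_one, ← mul_assoc, Ring.mul_inverse_cancel _ hv1.1, one_mul] at h

end Banach

section Family

variable {R : Type*} [NormedRing R] [CompleteSpace R] {I : Ideal R} {F : ℝ → ℝ → R}

theorem IsUnitLift.eventually_add_sub (hF : ContinuousOn (uncurry F) (Icc 0 1 ×ˢ Icc 0 1))
    (hF0 : ∀ s ∈ Icc (0 : ℝ) 1, F s 0 = 1) {s : ℝ} (hs : s ∈ Icc (0 : ℝ) 1) {v : ℝ → R}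
    (hv : IsUnitLift I (F s) v) :
    ∀ᶠ s' in 𝓝[Icc 0 1] s, IsUnitLift I (F s') fun t => v t + (F s' t - F s t) := by
  -- The compact set `v '' [0, 1]` of units has a uniform neighbourhood of units.
  obtain ⟨δ, hδ, hδU⟩ := (isCompact_Icc.image_of_continuousOn hv.continuousOn)
    |>.exists_thickening_subset_open Units.isOpen (image_subset_iff.2 hv.isUnit)
  obtain ⟨U, hU, hUF⟩ :=
    isCompact_Icc.mem_uniformity_of_prod hF hs (Metric.dist_mem_uniformity hδ)
  filter_upwards [hU, self_mem_nhdsWithin] with s' hs'U hs'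
  refine ⟨hv.continuousOn.add ((hF.uncurry_left s' hs').sub (hF.uncurry_left s hs)),
    by simp [hv.map_zero, hF0 s' hs', hF0 s hs], fun t ht => hδU ?_,
    fun t ht => by simpa [sub_add_eq_sub_sub] using hv.sub_mem t ht⟩
  exact Metric.mem_thickening_iff.2 ⟨v t, mem_image_of_mem _ ht, by
    simpa [dist_eq_norm] using hUF s' hs'U t ht⟩

theorem IsUnitLift.joinedIn_of_family (hF : ContinuousOn (uncurry F) (Icc 0 1 ×ˢ Icc 0 1))
    (hF0 : ∀ s ∈ Icc (0 : ℝ) 1, F s 0 = 1) (hF1 : ∀ s ∈ Icc (0 : ℝ) 1, F s 1 = 1)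
    (hlift : ∀ s ∈ Icc (0 : ℝ) 1, ∃ v, IsUnitLift I (F s) v)
    {s s' : ℝ} (hs : s ∈ Icc (0 : ℝ) 1) (hs' : s' ∈ Icc (0 : ℝ) 1) {v w : ℝ → R}
    (hv : IsUnitLift I (F s) v) (hw : IsUnitLift I (F s') w) :
    JoinedIn I.unitsCongrOne (v 1) (w 1) := by
  let P s s' := ∀ v w, IsUnitLift I (F s) v → IsUnitLift I (F s') w →
    JoinedIn I.unitsCongrOne (v 1) (w 1)
  refine isPreconnected_Icc.induction₂ P (fun s hs => ?_)
    (fun s s' s'' _ hs' _ h h' v w hv hw => ?_) (fun s s' _ _ h v w hv hw => (h w v hw hv).symm)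
    hs hs' v w hv hw
  · obtain ⟨v₀, hv₀⟩ := hlift s hs
    filter_upwards [hv₀.eventually_add_sub hF hF0 hs, self_mem_nhdsWithin] with s' hv₀' hs'
    intro v w hv hw
    have h := hv.joinedIn_of_map_one hv₀ (hF1 s hs)
    -- The perturbed lift `v₀ + (F s' - F s)` of `F s'` ends where `v₀` does.
    rw [show v₀ 1 = v₀ 1 + (F s' 1 - F s 1) by simp [hF1 s hs, hF1 s' hs']] at h
    exact h.trans (hv₀'.joinedIn_of_map_one hw (hF1 s' hs'))
  · obtain ⟨u, hu⟩ := hlift s' hs'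
    exact (h v u hv hu).trans (h' u w hu hw)

end Family

section Split

variable {R : Type*} [NormedRing R] [CompleteSpace R] {I : Ideal R} {u v : ℝ → R}

/-- `u c = v c * (v c⁻¹ * u c)`, where `v c` is joined to `v 0 = 1` along `v`, and `v c⁻¹ * u c`
to `v 1⁻¹ * u 1 = v 1⁻¹` along `v⁻¹ * u`. -/
theorem IsUnitLift.joinedIn_of_split (hv : IsUnitLift I u v)
    (hv1 : JoinedIn I.unitsCongrOne (v 1) 1) {c : ℝ} (hc : c ∈ Icc (0 : ℝ) 1)
    (hu : ContinuousOn u (Icc 0 1)) (hu1 : u 1 = 1) (hlow : ∀ t ∈ Icc 0 c, u t - 1 ∈ I)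
    (hhigh : ∀ t ∈ Icc c 1, IsUnit (u t)) : JoinedIn I.unitsCongrOne (u c) 1 := by
  have hlow_sub : Icc 0 c ⊆ Icc 0 1 := Icc_subset_Icc_right hc.2
  have hhigh_sub : Icc c 1 ⊆ Icc 0 1 := Icc_subset_Icc_left hc.1
  have hvc : v c ∈ I.unitsCongrOne := hv.mem_unitsCongrOne hc (hlow c (right_mem_Icc.2 hc.1))
  have hv1_inv : Ring.inverse (v 1) ∈ I.unitsCongrOne := Ideal.inverse_mem_unitsCongrOne <|
    hv.mem_unitsCongrOne (right_mem_Icc.2 zero_le_one) (by simp [hu1])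
  have h_one_vc : JoinedIn I.unitsCongrOne 1 (v c) := by
    simpa [hv.map_zero] using joinedIn_of_continuousOn_Icc hc.1
      (hv.continuousOn.mono hlow_sub) fun t ht => hv.mem_unitsCongrOne (hlow_sub ht) (hlow t ht)
  have h_quot : JoinedIn I.unitsCongrOne (Ring.inverse (v c) * u c) (Ring.inverse (v 1)) := by
    simpa [hu1] using joinedIn_of_continuousOn_Icc hc.2
      ((hv.continuousOn_inverse.mul hu).mono hhigh_sub) fun t ht =>
        Ideal.inverse_mul_mem_unitsCongrOne (hv.isUnit t (hhigh_sub ht)) (hhigh t ht)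
          (hv.sub_mem t (hhigh_sub ht))
  have h₁ := (JoinedIn.refl hvc).mul_of_submonoid h_quot
  rw [← mul_assoc, Ring.mul_inverse_cancel _ hvc.1, one_mul] at h₁
  have h₂ := h_one_vc.symm.mul_of_submonoid (JoinedIn.refl hv1_inv)
  simpa using h₁.trans (h₂.trans (by simpa using hv1.ringInverse_unitsCongrOne))

end Split

section Corner

variable {X : Type*}

/-- Along the bottom edge from `h 0 0` to `h s 0`, then up to `h s 1`, each leg in time `1/2`. -/
def cornerPath (h : ℝ → ℝ → X) (s t : ℝ) : X :=
  h (s * min (2 * t) 1) (max (2 * t - 1) 0)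

theorem cornerPath_of_le_half (h : ℝ → ℝ → X) (s : ℝ) {t : ℝ} (ht : t ≤ 1 / 2) :
    cornerPath h s t = h (s * (2 * t)) 0 := by
  rw [cornerPath, min_eq_left (by linarith), max_eq_right (by linarith)]

theorem cornerPath_of_half_le (h : ℝ → ℝ → X) (s : ℝ) {t : ℝ} (ht : 1 / 2 ≤ t) :
    cornerPath h s t = h s (2 * t - 1) := by
  rw [cornerPath, min_eq_right (by linarith), max_eq_left (by linarith), mul_one]

@[simp]
theorem cornerPath_apply_zero (h : ℝ → ℝ → X) (s : ℝ) : cornerPath h s 0 = h 0 0 := by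
  simp [cornerPath]

@[simp]
theorem cornerPath_apply_one (h : ℝ → ℝ → X) (s : ℝ) : cornerPath h s 1 = h s 1 := by
  norm_num [cornerPath]

theorem mapsTo_cornerParam :
    MapsTo (fun p : ℝ × ℝ => (p.1 * min (2 * p.2) 1, max (2 * p.2 - 1) 0))
      (Icc 0 1 ×ˢ Icc 0 1) (Icc 0 1 ×ˢ Icc 0 1) := fun p ⟨⟨hs₀, hs₁⟩, ht₀, ht₁⟩ =>
  ⟨⟨by positivity, mul_le_one₀ hs₁ (by positivity) (min_le_right _ _)⟩,
    le_max_right _ _, max_le (by linarith) zero_le_one⟩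

theorem ContinuousOn.cornerPath [TopologicalSpace X] {h : ℝ → ℝ → X}
    (hh : ContinuousOn (uncurry h) (Icc 0 1 ×ˢ Icc 0 1)) :
    ContinuousOn (uncurry (cornerPath h)) (Icc 0 1 ×ˢ Icc 0 1) :=
  hh.comp (by fun_prop) mapsTo_cornerParam

end Corner

section Homotopy

variable {R : Type*} [NormedRing R] [CompleteSpace R] {I : Ideal R}

theorem joinedIn_unitsCongrOne_of_homotopy {h : ℝ → ℝ → R}
    (hh : ContinuousOn (uncurry h) (Icc 0 1 ×ˢ Icc 0 1))
    (hbot : ∀ s ∈ Icc (0 : ℝ) 1, h s 0 - 1 ∈ I) (htop : ∀ s ∈ Icc (0 : ℝ) 1, h s 1 = 1)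
    (hleft : ∀ t ∈ Icc (0 : ℝ) 1, h 0 t = 1) (hright : ∀ t ∈ Icc (0 : ℝ) 1, IsUnit (h 1 t))
    (hlift : ∀ s ∈ Icc (0 : ℝ) 1, ∃ v, IsUnitLift I (cornerPath h s) v) :
    JoinedIn I.unitsCongrOne (h 1 0) 1 := by
  have h01 : (0 : ℝ) ∈ Icc (0 : ℝ) 1 := left_mem_Icc.2 zero_le_one
  have h11 : (1 : ℝ) ∈ Icc (0 : ℝ) 1 := right_mem_Icc.2 zero_le_one
  have hF0 : ∀ s ∈ Icc (0 : ℝ) 1, cornerPath h s 0 = 1 := fun s _ => by simp [hleft 0 h01]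
  have hF1 : ∀ s ∈ Icc (0 : ℝ) 1, cornerPath h s 1 = 1 := fun s hs => by simp [htop s hs]
  have hconst : IsUnitLift I (cornerPath h 0) 1 := isUnitLift_one fun t ht => by
    have h0t : cornerPath h 0 t = 1 := by
      simpa [cornerPath] using hleft _ (mapsTo_cornerParam (mk_mem_prod h01 ht)).2
    simp [h0t]
  have hlow : ∀ t ∈ Icc (0 : ℝ) (1 / 2), cornerPath h 1 t - 1 ∈ I := fun t ht => by
    rw [cornerPath_of_le_half h 1 ht.2, one_mul]
    exact hbot _ ⟨by linarith [ht.1], by linarith [ht.2]⟩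
  have hhigh : ∀ t ∈ Icc (1 / 2 : ℝ) 1, IsUnit (cornerPath h 1 t) := fun t ht => by
    rw [cornerPath_of_half_le h 1 ht.1]
    exact hright _ ⟨by linarith [ht.1], by linarith [ht.2]⟩
  obtain ⟨v, hv⟩ := hlift 1 h11
  have hv1 := hv.joinedIn_of_family hh.cornerPath hF0 hF1 hlift h11 h01 hconst
  simpa [cornerPath_of_le_half] using hv.joinedIn_of_split hv1 (c := 1 / 2) (by norm_num)
    (hh.cornerPath.uncurry_left 1 h11) (hF1 1 h11) hlow hhigh

end Homotopy

theorem null_homotopic_elliptic_path_connects_in_ideal_general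
    {A : Type*} [NormedRing A] [NormedAlgebra ℂ A] [CompleteSpace A]
    (J : Set A) (hJ0 : (0:A) ∈ J)
    (hJadd : ∀ x ∈ J, ∀ y ∈ J, x + y ∈ J)
    (hJmull : ∀ (a : A), ∀ x ∈ J, a * x ∈ J)
    {N : ℕ} (S : Matrix (Fin N) (Fin N) A)
    (hS : ∀ i j, S i j ∈ J)
    (h : ℝ → ℝ → Matrix (Fin N) (Fin N) A)
    (hcont : ContinuousOn (fun p : ℝ × ℝ => h p.1 p.2)
      (Set.Icc 0 1 ×ˢ Set.Icc 0 1))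
    (hbot : ∀ s ∈ Set.Icc (0:ℝ) 1, h s 0 = 1 + (s : ℂ) • S)
    (htop : ∀ s ∈ Set.Icc (0:ℝ) 1, h s 1 = 1)
    (hleft : ∀ t ∈ Set.Icc (0:ℝ) 1, h 0 t = 1)
    (hellip : ∀ s ∈ Set.Icc (0:ℝ) 1, ∀ t ∈ Set.Icc (0:ℝ) 1,
      IsElliptic J (h s t))
    (hsides : ∀ t ∈ Set.Icc (0:ℝ) 1, IsUnit (h 0 t) ∧ IsUnit (h 1 t))
    -- lifting of paths of invertibles from the quotient
    (hlift : ∀ u : ℝ → Matrix (Fin N) (Fin N) A,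
      ContinuousOn u (Set.Icc 0 1) →
      (∀ t ∈ Set.Icc (0:ℝ) 1, IsElliptic J (u t)) →
      u 0 = 1 →
      ∃ v : ℝ → Matrix (Fin N) (Fin N) A,
        ContinuousOn v (Set.Icc 0 1) ∧ v 0 = 1 ∧
        (∀ t ∈ Set.Icc (0:ℝ) 1, IsUnit (v t)) ∧
        (∀ t ∈ Set.Icc (0:ℝ) 1, ∀ i j, (u t - v t) i j ∈ J)) :
    ∃ γ : ℝ → Matrix (Fin N) (Fin N) A,
      ContinuousOn γ (Set.Icc 0 1) ∧
      γ 0 = 1 + S ∧ γ 1 = 1 ∧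
      ∀ t ∈ Set.Icc (0:ℝ) 1,
        IsUnit (γ t) ∧ ∀ i j, (γ t - 1) i j ∈ J := by
  let J' : Ideal A :=
    { carrier := J, add_mem' := fun ha hb => hJadd _ ha _ hb, zero_mem' := hJ0
      smul_mem' := hJmull }
  -- The norm is only a tool: `linftyOpNormedRing` induces the product topology on matrices.
  let _ : NormedRing (Matrix (Fin N) (Fin N) A) := Matrix.linftyOpNormedRing
  have _ : @CompleteSpace (Matrix (Fin N) (Fin N) A) PseudoMetricSpace.toUniformSpace :=
    inferInstanceAs (CompleteSpace (Matrix (Fin N) (Fin N) A))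
  have hjoin : JoinedIn (J'.matrix (Fin N)).unitsCongrOne (h 1 0) 1 := by
    refine joinedIn_unitsCongrOne_of_homotopy hcont (fun s hs i j => ?_) htop hleft
      (fun t ht => (hsides t ht).2) fun s hs => ?_
    · rw [hbot s hs, add_sub_cancel_left, Matrix.smul_apply, Algebra.smul_def]
      exact hJmull (algebraMap ℂ A s) _ (hS i j)
    · obtain ⟨v, hvc, hv0, hvu, hvJ⟩ := hlift _ (hcont.cornerPath.uncurry_left s hs)
        (fun t ht => hellip _ (mapsTo_cornerParam (mk_mem_prod hs ht)).1 _
          (mapsTo_cornerParam (mk_mem_prod hs ht)).2)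
        (by simp [hleft 0 (left_mem_Icc.2 zero_le_one)])
      exact ⟨v, ⟨hvc, hv0, hvu, hvJ⟩⟩
  obtain ⟨γ, hγ, hγ0, hγ1, hγJ⟩ := hjoin.exists_continuousOn_Icc
  refine ⟨γ, hγ, ?_, hγ1, fun t ht => ⟨(hγJ ht).1, (hγJ ht).2⟩⟩
  rw [hγ0, hbot 1 (right_mem_Icc.2 zero_le_one)]
  simp

/-- Let `A` be a unital Banach algebra and `J ⊆ A` a closed
two-sided ideal. Suppose `S ∈ M_N(J)` with `I + S` invertible, and the path
`s ↦ I + sS` is null-homotopic in the elliptic elements relative to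
`GL_N(A)` via a homotopy `h` as described. If every path of invertibles in
`M_N(A/J)` starting at `I` lifts to a path of invertibles in `M_N(A)`
starting at `I`, then `I + S` is connected to `I` within
`{I + T : T ∈ M_N(J), I + T invertible}`. -/
theorem null_homotopic_elliptic_path_connects_in_ideal
    {A : Type*} [NormedRing A] [NormedAlgebra ℂ A] [CompleteSpace A]
    (J : Set A) (hJ0 : (0:A) ∈ J)
    (hJadd : ∀ x ∈ J, ∀ y ∈ J, x + y ∈ J)
    (hJneg : ∀ x ∈ J, -x ∈ J)
    (hJmull : ∀ (a : A), ∀ x ∈ J, a * x ∈ J)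
    (hJmulr : ∀ (a : A), ∀ x ∈ J, x * a ∈ J)
    (hJclosed : IsClosed J)
    {N : ℕ} (S : Matrix (Fin N) (Fin N) A)
    (hS : ∀ i j, S i j ∈ J)
    (hSinv : IsUnit (1 + S))
    (h : ℝ → ℝ → Matrix (Fin N) (Fin N) A)
    (hcont : ContinuousOn (fun p : ℝ × ℝ => h p.1 p.2)
      (Set.Icc 0 1 ×ˢ Set.Icc 0 1))
    (hbot : ∀ s ∈ Set.Icc (0:ℝ) 1, h s 0 = 1 + (s : ℂ) • S)
    (htop : ∀ s ∈ Set.Icc (0:ℝ) 1, h s 1 = 1)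
    (hleft : ∀ t ∈ Set.Icc (0:ℝ) 1, h 0 t = 1)
    (hellip : ∀ s ∈ Set.Icc (0:ℝ) 1, ∀ t ∈ Set.Icc (0:ℝ) 1,
      IsElliptic J (h s t))
    (hsides : ∀ t ∈ Set.Icc (0:ℝ) 1, IsUnit (h 0 t) ∧ IsUnit (h 1 t))
    (htopinv : ∀ s ∈ Set.Icc (0:ℝ) 1, IsUnit (h s 1))
    -- lifting of paths of invertibles from the quotient
    (hlift : ∀ u : ℝ → Matrix (Fin N) (Fin N) A,
      ContinuousOn u (Set.Icc 0 1) →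
      (∀ t ∈ Set.Icc (0:ℝ) 1, IsElliptic J (u t)) →
      u 0 = 1 →
      ∃ v : ℝ → Matrix (Fin N) (Fin N) A,
        ContinuousOn v (Set.Icc 0 1) ∧ v 0 = 1 ∧
        (∀ t ∈ Set.Icc (0:ℝ) 1, IsUnit (v t)) ∧
        (∀ t ∈ Set.Icc (0:ℝ) 1, ∀ i j, (u t - v t) i j ∈ J)) :
    ∃ γ : ℝ → Matrix (Fin N) (Fin N) A,
      ContinuousOn γ (Set.Icc 0 1) ∧
      γ 0 = 1 + S ∧ γ 1 = 1 ∧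
      ∀ t ∈ Set.Icc (0:ℝ) 1,
        IsUnit (γ t) ∧ ∀ i j, (γ t - 1) i j ∈ J :=
  null_homotopic_elliptic_path_connects_in_ideal_general J hJ0 hJadd hJmull S hS h hcont hbot htop
    hleft hellip hsides hlift
end

section
/- Let Ω be a differential graded algebra over ℂ with differential d of degree +1 satisfying the graded Leibniz rule, and let ∫ : Ω^k → ℂ be a graded trace of degree k, i.e. ∫ vanishes outside degree k and ∫(ω η) = (−1)^{|ω||η|} ∫(η ω). Let ρ : A → Ω^0 be a unital algebra homomorphism from a unital ℂ-algebra A. Define φ_k(a_0,…,a_k) = (1/k!) ∫ ρ(a_0) dρ(a_1) ⋯ dρ(a_k). Then b φ_k = 0, where b is the Hochschild coboundary. -/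
namespace Hochschild

variable {A : Type*} [Ring A]

/-- The `j`-th face of a `(k+2)`-tuple: `(a₀, …, aⱼaⱼ₊₁, …, a_{k+1})`. -/
def face (k : ℕ) (j : Fin (k+1)) (a : Fin (k+2) → A) : Fin (k+1) → A :=
  fun i =>
    if (i : ℕ) < (j : ℕ) then a i.castSucc
    else if (i : ℕ) = (j : ℕ) then a i.castSucc * a i.succ
    else a i.succ

/-- The cyclic face `(a_{k+1}a₀, a₁, …, a_k)`. -/
def cycFace (k : ℕ) (a : Fin (k+2) → A) : Fin (k+1) → A :=
  fun i => if (i : ℕ) = 0 then a (Fin.last (k+1)) * a 0 else a i.castSucc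

/-- The Hochschild coboundary `b : C^k(A) → C^{k+1}(A)`. -/
noncomputable def hb (k : ℕ) (φ : (Fin (k+1) → A) → ℂ) : (Fin (k+2) → A) → ℂ :=
  fun a =>
    (∑ j : Fin (k+1), (-1 : ℂ) ^ (j : ℕ) * φ (face k j a))
      + (-1 : ℂ) ^ (k+1) * φ (cycFace k a)

end Hochschild

private lemma list_prod_mem_deg {W : Type*} [Ring W] [Algebra ℂ W]
    (Ω : ℕ → Submodule ℂ W) (hone : (1 : W) ∈ Ω 0)
    (hmul : ∀ i j : ℕ, ∀ x y : W, x ∈ Ω i → y ∈ Ω j → x * y ∈ Ω (i + j)) :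
    ∀ (L : List W), (∀ x ∈ L, x ∈ Ω 1) → L.prod ∈ Ω L.length := by
  intro L
  induction L with
  | nil => intro _; simpa using hone
  | cons x t ih =>
    intro h
    have := hmul 1 t.length x t.prod (h x (by simp))
      (ih (fun y hy => h y (by simp [hy])))
    simpa [List.prod_cons, Nat.add_comm] using this

private lemma telescope_sum (k : ℕ) (X : ℕ → ℂ) :
    (∑ j ∈ Finset.range (k+1),
      (-1:ℂ)^j * (if j = 0 then X 0 else X j + X (j-1)))
      = (-1:ℂ)^k * X k := by
  induction k with
  | zero => simp
  | succ n ih =>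
    rw [Finset.sum_range_succ, ih, if_neg (Nat.succ_ne_zero n)]
    simp only [Nat.add_sub_cancel]
    ring


open Hochschild in
/-- Let `(Ω,d)` be a differential graded algebra over ℂ with a
graded trace `∫` of degree `k`, and `ρ : A → Ω⁰` a unital homomorphism from a
unital ℂ-algebra `A`. Then the cochain
`φ_k(a₀,…,a_k) = (1/k!) ∫ ρ(a₀) dρ(a₁) ⋯ dρ(a_k)` is Hochschild closed:
`b φ_k = 0`. -/
theorem graded_trace_cochain_hochschild_closed
    (W : Type*) [Ring W] [Algebra ℂ W]
    (Ω : ℕ → Submodule ℂ W)                      -- the grading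
    (d : W →ₗ[ℂ] W)                              -- the differential
    (A : Type*) [Ring A] [Algebra ℂ A]
    (ρ : A →ₐ[ℂ] W)
    (τ : W →ₗ[ℂ] ℂ)                              -- the graded trace ∫
    (k : ℕ)
    (hone : (1 : W) ∈ Ω 0)
    (hmul : ∀ i j : ℕ, ∀ x y : W, x ∈ Ω i → y ∈ Ω j → x * y ∈ Ω (i + j))
    (hd : ∀ i : ℕ, ∀ x : W, x ∈ Ω i → d x ∈ Ω (i + 1))
    (hLeibniz : ∀ i : ℕ, ∀ x y : W, x ∈ Ω i →
      d (x * y) = d x * y + ((-1 : ℂ) ^ i) • (x * d y))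
    (hτdeg : ∀ j : ℕ, ∀ x : W, x ∈ Ω j → j ≠ k → τ x = 0)
    (hτtrace : ∀ i j : ℕ, ∀ x y : W, x ∈ Ω i → y ∈ Ω j →
      τ (x * y) = (-1 : ℂ) ^ (i * j) * τ (y * x))
    (hρ : ∀ a : A, ρ a ∈ Ω 0) :
    hb k (fun a : Fin (k+1) → A =>
      ((k.factorial : ℂ))⁻¹ *
        τ (ρ (a 0) * (List.ofFn fun i : Fin k => d (ρ (a i.succ))).prod))
      = 0 := by
  classical
  funext a
  simp only [Pi.zero_apply]
  set c : ℂ := ((k.factorial : ℂ))⁻¹ with hc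
  set ℓ : List W := List.ofFn (fun i : Fin (k+1) => d (ρ (a i.succ))) with hℓ
  have hlen : ℓ.length = k+1 := by simp [hℓ]
  have hget : ∀ (n : ℕ) (hn : n < k+1),
      ℓ[n]'(by omega) = d (ρ (a ⟨n+1, by omega⟩)) := by
    intro n hn
    rw [List.getElem_of_eq hℓ, List.getElem_ofFn]
    exact congrArg (fun t : Fin (k+2) => d (ρ (a t)))
      (Fin.ext (by simp [Fin.val_succ] <;> omega))
  have hmemℓ : ∀ x ∈ ℓ, x ∈ Ω 1 := by
    intro x hx
    rw [hℓ, List.mem_ofFn] at hx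
    obtain ⟨i, rfl⟩ := hx
    simpa using hd 0 _ (hρ _)
  -- the telescoping quantity
  set X : ℕ → ℂ := fun m =>
    τ (ρ (a 0) * ((ℓ.take m).prod *
      (ρ (a (⟨min (m+1) (k+1), by omega⟩ : Fin (k+2))) * (ℓ.drop (m+1)).prod)))
    with hX
  have hXval : ∀ (m : ℕ) (hm : m ≤ k),
      X m = τ (ρ (a 0) * ((ℓ.take m).prod *
        (ρ (a (⟨m+1, by omega⟩ : Fin (k+2))) * (ℓ.drop (m+1)).prod))) := by
    intro m hm
    rw [hX]
    beta_reduce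
    exact congrArg (fun t : Fin (k+2) =>
      τ (ρ (a 0) * ((ℓ.take m).prod * (ρ (a t) * (ℓ.drop (m+1)).prod))))
      (Fin.ext (by simp; omega))
  -- value of the cochain on the faces
  have key : ∀ j : Fin (k+1),
      τ (ρ (face k j a 0) *
        (List.ofFn fun i : Fin k => d (ρ (face k j a i.succ))).prod)
      = if (j : ℕ) = 0 then X 0 else X (j : ℕ) + X ((j : ℕ) - 1) := by
    rintro ⟨jv, hjv⟩
    match jv, hjv with
    | 0, hjv =>
      rw [if_pos rfl]
      have h0 : face k ⟨0, hjv⟩ a 0 = a 0 * a 1 := by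
        simp [face]
      have hlist : (List.ofFn fun i : Fin k => d (ρ (face k ⟨0, hjv⟩ a i.succ)))
          = ℓ.drop 1 := by
        apply List.ext_getElem
        · simp [hlen]
        · intro n h1 h2
          have hn : n < k := by simpa [hlen] using h2
          simp only [List.getElem_ofFn, List.getElem_drop]
          rw [hget (1+n) (by omega)]
          simp only [face, Fin.val_succ]
          rw [if_neg (by omega), if_neg (by omega)]
          exact congrArg (fun t : Fin (k+2) => d (ρ (a t)))
            (Fin.ext (by simp [Fin.val_succ] <;> omega))
      rw [h0, hlist, hXval 0 (by omega)]
      simp only [List.take_zero, List.prod_nil, one_mul, zero_add, map_mul, mul_assoc]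
      exact congrArg (fun t : Fin (k+2) =>
        τ (ρ (a 0) * (ρ (a t) * (ℓ.drop 1).prod)))
        (Fin.ext (by simp))
    | j'+1, hjv =>
      rw [if_neg (Nat.succ_ne_zero j')]
      have hj'k : j' + 1 ≤ k := by omega
      have h0 : face k ⟨j'+1, hjv⟩ a 0 = a 0 := by
        simp only [face]
        rw [if_pos (by simp)]
        exact congrArg a (Fin.ext (by simp))
      have hlist : (List.ofFn fun i : Fin k => d (ρ (face k ⟨j'+1, hjv⟩ a i.succ)))
          = ℓ.take j' ++ d (ρ (a ⟨j'+1, by omega⟩ * a ⟨j'+2, by omega⟩)) :: ℓ.drop (j'+2) := by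
        apply List.ext_getElem
        · simp [hlen]; omega
        · intro n h1 h2
          have hn : n < k := by simpa using h1
          have hlt : (ℓ.take j').length = j' := by simp [hlen]; omega
          rw [List.getElem_append]
          simp only [hlt]
          simp only [List.getElem_ofFn]
          rcases lt_trichotomy n j' with hc | hc | hc
          · rw [dif_pos hc, List.getElem_take, hget n (by omega)]
            simp only [face, Fin.val_succ]
            rw [if_pos (by simp; omega)]
            exact congrArg (fun t : Fin (k+2) => d (ρ (a t)))
              (Fin.ext (by simp [Fin.val_succ] <;> omega))
          · subst hc
            rw [dif_neg (by omega)]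
            simp only [Nat.sub_self, List.getElem_cons_zero]
            simp only [face, Fin.val_succ]
            rw [if_neg (by omega), if_pos (by simp)]
            refine congrArg (fun t : W => d t) ?_
            refine congrArg ρ ?_
            refine congrArg₂ (· * ·) ?_ ?_
            · exact congrArg a (Fin.ext (by simp [Fin.val_succ] <;> omega))
            · exact congrArg a (Fin.ext (by simp [Fin.val_succ] <;> omega))
          · rw [dif_neg (by omega)]
            obtain ⟨m, hm⟩ : ∃ m, n - j' = m + 1 := ⟨n - j' - 1, by omega⟩
            simp only [hm, List.getElem_cons_succ, List.getElem_drop]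
            rw [hget (j'+2+m) (by omega)]
            simp only [face, Fin.val_succ]
            rw [if_neg (by omega), if_neg (by omega)]
            exact congrArg (fun t : Fin (k+2) => d (ρ (a t)))
              (Fin.ext (by simp [Fin.val_succ] <;> omega))
      have hmid : d (ρ (a ⟨j'+1, by omega⟩ * a ⟨j'+2, by omega⟩))
          = ℓ[j']'(by omega) * ρ (a ⟨j'+2, by omega⟩)
            + ρ (a ⟨j'+1, by omega⟩) * ℓ[j'+1]'(by omega) := by
        rw [map_mul, hLeibniz 0 _ _ (hρ _), hget j' (by omega), hget (j'+1) (by omega)]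
        simp
      have hcoe : (↑(⟨j'+1, hjv⟩ : Fin (k+1)) : ℕ) = j'+1 := rfl
      rw [hcoe]
      have htake : (ℓ.take (j'+1)).prod = (ℓ.take j').prod * ℓ[j']'(by omega) := by
        rw [List.take_succ, List.getElem?_eq_getElem (by omega)]
        simp only [Option.toList_some, List.prod_append, List.prod_cons, List.prod_nil,
          mul_one]
      have hdrop : ℓ.drop (j'+1) = ℓ[j'+1]'(by omega) :: ℓ.drop (j'+2) :=
        List.drop_eq_getElem_cons (by omega)
      rw [h0, hlist, List.prod_append, List.prod_cons, hmid, Nat.add_sub_cancel,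
        hXval (j'+1) hj'k, hXval j' (by omega),
        htake, hdrop, List.prod_cons]
      rw [← map_add τ]
      refine congrArg τ ?_
      simp only [add_mul, mul_add, mul_assoc]
  -- the cyclic term
  have htkmem : (ℓ.take k).prod ∈ Ω k := by
    have hlenk : (ℓ.take k).length = k := by simp [hlen]
    have := list_prod_mem_deg Ω hone hmul (ℓ.take k)
      (fun x hx => hmemℓ x (List.mem_of_mem_take hx))
    rwa [hlenk] at this
  have hcyc : τ (ρ (cycFace k a 0) *
      (List.ofFn fun i : Fin k => d (ρ (cycFace k a i.succ))).prod) = X k := by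
    have h0 : cycFace k a 0 = a (Fin.last (k+1)) * a 0 := by simp [cycFace]
    have hlist : (List.ofFn fun i : Fin k => d (ρ (cycFace k a i.succ)))
        = ℓ.take k := by
      apply List.ext_getElem
      · simp [hlen]
      · intro n h1 h2
        have hn : n < k := by simpa using h1
        simp only [List.getElem_ofFn, List.getElem_take]
        rw [hget n (by omega)]
        simp only [cycFace, Fin.val_succ]
        rw [if_neg (by omega)]
        exact congrArg (fun t : Fin (k+2) => d (ρ (a t)))
          (Fin.ext (by simp [Fin.val_succ] <;> omega))
    have hmem1 : ρ (a 0) * (ℓ.take k).prod ∈ Ω k := by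
      have := hmul 0 k (ρ (a 0)) _ (hρ _) htkmem
      simpa using this
    rw [h0, hlist,
      show ρ (a (Fin.last (k+1)) * a 0) = ρ (a (Fin.last (k+1))) * ρ (a 0) from
        map_mul ρ _ _]
    calc τ (ρ (a (Fin.last (k+1))) * ρ (a 0) * (ℓ.take k).prod)
        = τ (ρ (a (Fin.last (k+1))) * (ρ (a 0) * (ℓ.take k).prod)) := by
          rw [mul_assoc]
      _ = (-1:ℂ)^(0*k) * τ ((ρ (a 0) * (ℓ.take k).prod) * ρ (a (Fin.last (k+1)))) :=
          hτtrace 0 k _ _ (hρ _) hmem1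
      _ = X k := by
          rw [hXval k le_rfl]
          have hnil : ℓ.drop (k+1) = [] := List.drop_eq_nil_of_le (by omega)
          rw [hnil]
          simp only [List.prod_nil, mul_one, Nat.zero_mul, pow_zero, one_mul, mul_assoc]
          exact congrArg (fun t : Fin (k+2) =>
            τ (ρ (a 0) * ((ℓ.take k).prod * ρ (a t)))) (Fin.ext (by simp [Fin.last]))
  -- assemble
  simp only [hb]
  have hterm : ∀ j : Fin (k+1),
      (-1:ℂ)^(j:ℕ) * (c * τ (ρ (face k j a 0) *
        (List.ofFn fun i : Fin k => d (ρ (face k j a i.succ))).prod))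
      = c * ((-1:ℂ)^(j:ℕ) *
          (if (j:ℕ) = 0 then X 0 else X (j:ℕ) + X ((j:ℕ) - 1))) := by
    intro j
    rw [key j]
    ring
  rw [Finset.sum_congr rfl (fun j _ => hterm j), ← Finset.mul_sum, hcyc]
  rw [Fin.sum_univ_eq_sum_range
    (fun j : ℕ => (-1:ℂ)^j * (if j = 0 then X 0 else X j + X (j - 1))) (k+1)]
  rw [telescope_sum k X]
  ring
end
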